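/- Let h_r : [0,∞) → (0,∞) be continuous with 2π ∫₀^∞ s h_r(s) ds = 1 and ∫₀^∞ s² h_r(s) ds < ∞, and define P_K(r) := 2π ∫₀^r s h_r(s) ds. Let Γ₁, Γ₂, Γ₃ be nonzero real numbers and let (X₁, X₂, X₃) be a solution of the EP-PV system with N = 3 defined on all of ℝ. If |X_m(t) − X_n(t)| → ∞ as t → +∞ and as t → −∞ for every pair m ≠ n, then 1/Γ₁ + 1/Γ₂ + 1/Γ₃ = 0. -/

import Mathlib

open scoped BigOperators

/-- The perpendicular `(v₁, v₂)^⊥ = (v₂, −v₁)` of a vector in ℝ². -/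
noncomputable def perp (v : EuclideanSpace ℝ (Fin 2)) : EuclideanSpace ℝ (Fin 2) :=
  (WithLp.equiv 2 (Fin 2 → ℝ)).symm ![v 1, -v 0]

/-- The right-hand side of the (scaled) Euler–Poincaré point-vortex system for the
`n`-th vortex, given the current positions `X`. -/
noncomputable def eppvRHS {N : ℕ} (Γ : Fin N → ℝ) (P_K : ℝ → ℝ)
    (X : Fin N → EuclideanSpace ℝ (Fin 2)) (n : Fin N) : EuclideanSpace ℝ (Fin 2) :=
  (-(1 / (2 * Real.pi))) • ∑ m ∈ Finset.univ.filter (fun m => m ≠ n),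
    ((Γ m * P_K ‖X n - X m‖) / ‖X n - X m‖ ^ 2) • perp (X n - X m)

/-- `X : Fin N → ℝ → ℝ²` is a solution of the EP-PV system on `J ⊆ ℝ`:
the vortices stay pairwise distinct on `J` and each curve is differentiable on `J`
with derivative given by the EP-PV vector field. -/
def IsEPPVSolution {N : ℕ} (Γ : Fin N → ℝ) (P_K : ℝ → ℝ) (J : Set ℝ)
    (X : Fin N → ℝ → EuclideanSpace ℝ (Fin 2)) : Prop :=
  (∀ m n : Fin N, m ≠ n → ∀ t ∈ J, X m t ≠ X n t) ∧
  (∀ n : Fin N, ∀ t ∈ J,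
    HasDerivWithinAt (X n) (eppvRHS Γ P_K (fun m => X m t) n) J t)

/-!
Write `d₀ = |X₁ − X₂|`, `d₁ = |X₂ − X₀|`, `d₂ = |X₀ − X₁|` for the sides of the vortex triangle.
For every `G` with `G'(r) = a r + b P_K(r)/r`, the quantity `Σₖ Γₖ⁻¹ G(dₖ)` is conserved: the
derivative of `dₖ²` is a fixed multiple of `Γₖ` times the oriented area of the triangle times a
difference of two values of `P_K(r)/r²`, and the weighted cyclic sum of these differences
cancels. Taking `G(r) = r²` and `G(r) = log r − ∫₁ʳ (1 − P_K(s))/s ds` gives two conservation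
laws (after multiplying by `Γ₀Γ₁Γ₂`, the impulse combination `Σ Γ_mΓ_n d_mn²` and, up to
normalisation, the Hamiltonian). Finite second moment of `h_r` gives `1 − P_K(r) = O(1/r)`, so
the integral converges and `Σₖ Γₖ⁻¹ log dₖ` has a finite limit as `t → ∞`.

Along an ultrafilter finer than `atTop`, the shape of the triangle normalised by its perimeter
converges. For a nondegenerate limit shape, `Σₖ Γₖ⁻¹ log dₖ` differs from
`(Σₖ Γₖ⁻¹) log(perimeter)` by a bounded amount, so `Σₖ Γₖ⁻¹ = 0`. A degenerate limit shape is
`(0, ½, ½)` up to order; then the first conservation law forces the weights of the two long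
sides to cancel, leaving `Γₖ⁻¹ log dₖ` bounded for the short side although `dₖ → ∞`.
-/

open Filter Topology Real Set MeasureTheory intervalIntegral
open scoped RealInnerProductSpace

theorem ContinuousOn.hasDerivAt_intervalIntegral {E : Type*} [NormedAddCommGroup E]
    [NormedSpace ℝ E] [CompleteSpace E] {f : ℝ → E} {s : Set ℝ} {a b : ℝ}
    (hf : ContinuousOn f s) (hs : MeasurableSet s) (hab : uIcc a b ⊆ s) (hb : s ∈ 𝓝 b) :
    HasDerivAt (fun x => ∫ t in a..x, f t) (f b) b :=
  integral_hasDerivAt_right (hf.mono hab).intervalIntegrable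
    (AEStronglyMeasurable.stronglyMeasurableAtFilter_of_mem (hf.aestronglyMeasurable hs) hb)
    (hf.continuousAt hb)

theorem HasDerivAt.norm {F : Type*} [NormedAddCommGroup F] [InnerProductSpace ℝ F]
    {f : ℝ → F} {f' : F} {x : ℝ} (hf : HasDerivAt f f' x) (h0 : f x ≠ 0) :
    HasDerivAt (fun y => ‖f y‖) (⟪f x, f'⟫ / ‖f x‖) x := by
  have h := hf.norm_sq.sqrt (by positivity)
  simp only [sqrt_sq (norm_nonneg _)] at h
  refine h.congr_deriv ?_
  have : ‖f x‖ ≠ 0 := norm_ne_zero_iff.2 h0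
  field_simp

structure IsRadialProfile (h_r : ℝ → ℝ) : Prop where
  continuousOn : ContinuousOn h_r (Ici 0)
  pos : ∀ s : ℝ, 0 ≤ s → 0 < h_r s
  integrableOn_mul : IntegrableOn (fun s => s * h_r s) (Ioi 0)
  normalized : 2 * π * ∫ s in Ioi (0 : ℝ), s * h_r s = 1
  integrableOn_sq_mul : IntegrableOn (fun s => s ^ 2 * h_r s) (Ioi 0)

noncomputable def logDefect (P_K : ℝ → ℝ) (r : ℝ) : ℝ := ∫ s in (1 : ℝ)..r, (1 - P_K s) / s

section Profile

variable {h_r P_K : ℝ → ℝ}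

theorem continuousOn_PK (hcont : ContinuousOn h_r (Ici 0))
    (hPK : ∀ r : ℝ, P_K r = 2 * π * ∫ s in (0 : ℝ)..r, s * h_r s) :
    ContinuousOn P_K (Ioi 0) := by
  obtain rfl : P_K = _ := funext hPK
  refine fun r (hr : 0 < r) => ContinuousAt.continuousWithinAt ?_
  refine (((continuousOn_id.mul hcont).hasDerivAt_intervalIntegral measurableSet_Ici
    ?_ (Ici_mem_nhds hr)).const_mul (2 * π)).continuousAt
  exact ordConnected_Ici.uIcc_subset (mem_Ici.2 le_rfl) hr.le

theorem continuousOn_one_sub_PK_div (hcont : ContinuousOn h_r (Ici 0))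
    (hPK : ∀ r : ℝ, P_K r = 2 * π * ∫ s in (0 : ℝ)..r, s * h_r s) :
    ContinuousOn (fun s => (1 - P_K s) / s) (Ioi 0) :=
  (continuousOn_const.sub (continuousOn_PK hcont hPK)).div continuousOn_id fun _ hs => ne_of_gt hs

theorem IsRadialProfile.one_sub_PK_eq (hh : IsRadialProfile h_r)
    (hPK : ∀ r : ℝ, P_K r = 2 * π * ∫ s in (0 : ℝ)..r, s * h_r s) {r : ℝ} (hr : 0 ≤ r) :
    1 - P_K r = 2 * π * ∫ s in Ioi r, s * h_r s := by
  rw [hPK, ← integral_Ioi_sub_Ioi hh.integrableOn_mul hr, ← hh.normalized]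
  ring

theorem IsRadialProfile.mul_integral_Ioi_le (hh : IsRadialProfile h_r) {r : ℝ} (hr : 0 ≤ r) :
    r * ∫ s in Ioi r, s * h_r s ≤ ∫ s in Ioi (0 : ℝ), s ^ 2 * h_r s := by
  have hsub : Ioi r ⊆ Ioi 0 := Ioi_subset_Ioi hr
  calc r * ∫ s in Ioi r, s * h_r s = ∫ s in Ioi r, r * (s * h_r s) :=
        (MeasureTheory.integral_const_mul r _).symm
    _ ≤ ∫ s in Ioi r, s ^ 2 * h_r s := by
        refine setIntegral_mono_on ((hh.integrableOn_mul.mono_set hsub).const_mul r)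
          (hh.integrableOn_sq_mul.mono_set hsub) measurableSet_Ioi fun s (hs : r < s) => ?_
        have := hh.pos s (hr.trans hs.le)
        nlinarith [mul_nonneg (mul_nonneg (sub_nonneg.2 hs.le) (hr.trans hs.le)) this.le]
    _ ≤ ∫ s in Ioi (0 : ℝ), s ^ 2 * h_r s := by
        refine setIntegral_mono_set hh.integrableOn_sq_mul ?_ hsub.eventuallyLE
        filter_upwards [ae_restrict_mem measurableSet_Ioi] with s (hs : 0 < s)
        exact (mul_pos (pow_pos hs 2) (hh.pos s hs.le)).le

theorem IsRadialProfile.one_sub_PK_nonneg (hh : IsRadialProfile h_r)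
    (hPK : ∀ r : ℝ, P_K r = 2 * π * ∫ s in (0 : ℝ)..r, s * h_r s) {r : ℝ} (hr : 0 ≤ r) :
    0 ≤ 1 - P_K r := by
  rw [hh.one_sub_PK_eq hPK hr]
  refine mul_nonneg (by positivity) (setIntegral_nonneg measurableSet_Ioi fun s hs => ?_)
  have hs : 0 < s := hr.trans_lt hs
  exact (mul_pos hs (hh.pos s hs.le)).le

theorem IsRadialProfile.mul_one_sub_PK_le (hh : IsRadialProfile h_r)
    (hPK : ∀ r : ℝ, P_K r = 2 * π * ∫ s in (0 : ℝ)..r, s * h_r s) {r : ℝ} (hr : 0 ≤ r) :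
    r * (1 - P_K r) ≤ 2 * π * ∫ s in Ioi (0 : ℝ), s ^ 2 * h_r s := by
  rw [hh.one_sub_PK_eq hPK hr, mul_left_comm]
  exact mul_le_mul_of_nonneg_left (hh.mul_integral_Ioi_le hr) (by positivity)

theorem IsRadialProfile.integrableOn_one_sub_PK_div (hh : IsRadialProfile h_r)
    (hPK : ∀ r : ℝ, P_K r = 2 * π * ∫ s in (0 : ℝ)..r, s * h_r s) :
    IntegrableOn (fun s => (1 - P_K s) / s) (Ioi 1) := by
  set C := 2 * π * ∫ s in Ioi (0 : ℝ), s ^ 2 * h_r s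
  refine ((integrableOn_Ioi_rpow_of_lt (by norm_num : (-2 : ℝ) < -1) one_pos).const_mul C).mono'
    (((continuousOn_one_sub_PK_div hh.continuousOn hPK).mono
      (Ioi_subset_Ioi zero_le_one)).aestronglyMeasurable measurableSet_Ioi) ?_
  filter_upwards [ae_restrict_mem measurableSet_Ioi] with s (hs : 1 < s)
  have hs0 : 0 < s := one_pos.trans hs
  rw [Real.norm_of_nonneg (div_nonneg (hh.one_sub_PK_nonneg hPK hs0.le) hs0.le),
    rpow_neg hs0.le, rpow_two, ← div_eq_mul_inv]
  calc (1 - P_K s) / s = s * (1 - P_K s) / s ^ 2 := by field_simp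
    _ ≤ C / s ^ 2 := by gcongr; exact hh.mul_one_sub_PK_le hPK hs0.le

theorem IsRadialProfile.tendsto_logDefect (hh : IsRadialProfile h_r)
    (hPK : ∀ r : ℝ, P_K r = 2 * π * ∫ s in (0 : ℝ)..r, s * h_r s) :
    Tendsto (logDefect P_K) atTop (𝓝 (∫ s in Ioi 1, (1 - P_K s) / s)) :=
  intervalIntegral_tendsto_integral_Ioi 1 (hh.integrableOn_one_sub_PK_div hPK) tendsto_id

theorem hasDerivAt_log_sub_logDefect (hcont : ContinuousOn h_r (Ici 0))
    (hPK : ∀ r : ℝ, P_K r = 2 * π * ∫ s in (0 : ℝ)..r, s * h_r s) {r : ℝ} (hr : 0 < r) :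
    HasDerivAt (fun r => log r - logDefect P_K r) (P_K r / r) r := by
  have hdef := (continuousOn_one_sub_PK_div hcont hPK).hasDerivAt_intervalIntegral
    measurableSet_Ioi (ordConnected_Ioi.uIcc_subset one_pos hr) (Ioi_mem_nhds hr)
  refine ((hasDerivAt_log hr.ne').sub hdef).congr_deriv ?_
  field_simp
  ring

end Profile

def wedge (u v : EuclideanSpace ℝ (Fin 2)) : ℝ := u 0 * v 1 - u 1 * v 0

theorem inner_perp (u v : EuclideanSpace ℝ (Fin 2)) : ⟪u, perp v⟫ = wedge u v := by
  simp only [perp, WithLp.equiv_symm_apply, PiLp.inner_apply, RCLike.inner_apply,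
    Real.ringHom_apply, Fin.sum_univ_two, Matrix.cons_val_zero, Matrix.cons_val_one, wedge]
  ring

section ThreeVortices

variable {Γ : Fin 3 → ℝ} {P_K : ℝ → ℝ}

theorem eppvRHS_fin_three (p : Fin 3 → EuclideanSpace ℝ (Fin 2)) {i j k : Fin 3}
    (hij : i ≠ j) (hik : i ≠ k) (hjk : j ≠ k) :
    eppvRHS Γ P_K p i = (-(1 / (2 * π))) •
      ((Γ j * P_K ‖p i - p j‖ / ‖p i - p j‖ ^ 2) • perp (p i - p j) +
        (Γ k * P_K ‖p i - p k‖ / ‖p i - p k‖ ^ 2) • perp (p i - p k)) := by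
  have : Finset.univ.filter (fun m => m ≠ i) = {j, k} := by
    ext m
    simp only [Finset.mem_filter, Finset.mem_univ, true_and, Finset.mem_insert,
      Finset.mem_singleton]
    omega
  rw [eppvRHS, this, Finset.sum_pair hjk]

theorem inner_sub_eppvRHS (p : Fin 3 → EuclideanSpace ℝ (Fin 2)) {i j k : Fin 3}
    (hij : i ≠ j) (hik : i ≠ k) (hjk : j ≠ k) :
    ⟪p i - p j, eppvRHS Γ P_K p i - eppvRHS Γ P_K p j⟫ =
      -(Γ k / (2 * π)) * wedge (p i - p j) (p j - p k) *
        (P_K ‖p i - p k‖ / ‖p i - p k‖ ^ 2 - P_K ‖p j - p k‖ / ‖p j - p k‖ ^ 2) := by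
  rw [eppvRHS_fin_three p hij hik hjk, eppvRHS_fin_three p hij.symm hjk hik]
  simp only [inner_sub_right, inner_add_right, real_inner_smul_right, inner_perp, wedge,
    PiLp.sub_apply]
  ring

theorem inv_mul_inner_sub_eppvRHS_sum_eq_zero (hΓ : ∀ n, Γ n ≠ 0) (a b : ℝ)
    (p : Fin 3 → EuclideanSpace ℝ (Fin 2)) :
    1 / Γ 0 * (a + b * (P_K ‖p 1 - p 2‖ / ‖p 1 - p 2‖ ^ 2)) *
        ⟪p 1 - p 2, eppvRHS Γ P_K p 1 - eppvRHS Γ P_K p 2⟫ +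
      1 / Γ 1 * (a + b * (P_K ‖p 2 - p 0‖ / ‖p 2 - p 0‖ ^ 2)) *
        ⟪p 2 - p 0, eppvRHS Γ P_K p 2 - eppvRHS Γ P_K p 0⟫ +
      1 / Γ 2 * (a + b * (P_K ‖p 0 - p 1‖ / ‖p 0 - p 1‖ ^ 2)) *
        ⟪p 0 - p 1, eppvRHS Γ P_K p 0 - eppvRHS Γ P_K p 1⟫ = 0 := by
  rw [inner_sub_eppvRHS (k := 0) p (by decide) (by decide) (by decide),
    inner_sub_eppvRHS (k := 1) p (by decide) (by decide) (by decide),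
    inner_sub_eppvRHS (k := 2) p (by decide) (by decide) (by decide),
    norm_sub_rev (p 1) (p 0), norm_sub_rev (p 2) (p 1), norm_sub_rev (p 0) (p 2)]
  have h₁ : wedge (p 2 - p 0) (p 0 - p 1) = wedge (p 1 - p 2) (p 2 - p 0) := by
    simp only [wedge, PiLp.sub_apply]; ring
  have h₂ : wedge (p 0 - p 1) (p 1 - p 2) = wedge (p 1 - p 2) (p 2 - p 0) := by
    simp only [wedge, PiLp.sub_apply]; ring
  rw [h₁, h₂]
  field_simp [hΓ 0, hΓ 1, hΓ 2]
  ring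

end ThreeVortices

section Conservation

variable {Γ : Fin 3 → ℝ} {P_K : ℝ → ℝ} {X : Fin 3 → ℝ → EuclideanSpace ℝ (Fin 2)}

theorem IsEPPVSolution.hasDerivAt (hX : IsEPPVSolution Γ P_K univ X) (n : Fin 3) (t : ℝ) :
    HasDerivAt (X n) (eppvRHS Γ P_K (fun m => X m t) n) t :=
  (hX.2 n t (mem_univ t)).hasDerivAt univ_mem

theorem IsEPPVSolution.norm_sub_pos (hX : IsEPPVSolution Γ P_K univ X) {i j : Fin 3}
    (hij : i ≠ j) (t : ℝ) : 0 < ‖X i t - X j t‖ :=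
  norm_pos_iff.2 (sub_ne_zero.2 (hX.1 i j hij t (mem_univ t)))

theorem IsEPPVSolution.hasDerivAt_comp_norm_sub (hX : IsEPPVSolution Γ P_K univ X)
    {G : ℝ → ℝ} {a b : ℝ} (hG : ∀ r, 0 < r → HasDerivAt G (a * r + b * (P_K r / r)) r)
    {i j : Fin 3} (hij : i ≠ j) (t : ℝ) :
    HasDerivAt (fun s => G ‖X i s - X j s‖)
      ((a + b * (P_K ‖X i t - X j t‖ / ‖X i t - X j t‖ ^ 2)) *
        ⟪X i t - X j t, eppvRHS Γ P_K (fun m => X m t) i -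
          eppvRHS Γ P_K (fun m => X m t) j⟫) t := by
  have hd := hX.norm_sub_pos hij t
  refine ((hG _ hd).comp t (((hX.hasDerivAt i t).sub (hX.hasDerivAt j t)).norm
    (norm_pos_iff.1 hd))).congr_deriv ?_
  simp only [Pi.sub_apply]
  field_simp

theorem IsEPPVSolution.inv_mul_sum_eq (hX : IsEPPVSolution Γ P_K univ X) (hΓ : ∀ n, Γ n ≠ 0)
    {G : ℝ → ℝ} {a b : ℝ} (hG : ∀ r, 0 < r → HasDerivAt G (a * r + b * (P_K r / r)) r)
    (s t : ℝ) :
    1 / Γ 0 * G ‖X 1 s - X 2 s‖ + 1 / Γ 1 * G ‖X 2 s - X 0 s‖ + 1 / Γ 2 * G ‖X 0 s - X 1 s‖ =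
      1 / Γ 0 * G ‖X 1 t - X 2 t‖ + 1 / Γ 1 * G ‖X 2 t - X 0 t‖ +
        1 / Γ 2 * G ‖X 0 t - X 1 t‖ := by
  have hderiv u : HasDerivAt (fun u => 1 / Γ 0 * G ‖X 1 u - X 2 u‖ +
      1 / Γ 1 * G ‖X 2 u - X 0 u‖ + 1 / Γ 2 * G ‖X 0 u - X 1 u‖) 0 u := by
    refine ((((hX.hasDerivAt_comp_norm_sub hG (by decide) u).const_mul (1 / Γ 0)).add
      ((hX.hasDerivAt_comp_norm_sub hG (by decide) u).const_mul (1 / Γ 1))).add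
      ((hX.hasDerivAt_comp_norm_sub hG (by decide) u).const_mul (1 / Γ 2))).congr_deriv ?_
    linear_combination inv_mul_inner_sub_eppvRHS_sum_eq_zero hΓ a b (fun m => X m u)
  exact is_const_of_deriv_eq_zero (fun u => (hderiv u).differentiableAt)
    (fun u => (hderiv u).deriv) s t

end Conservation

theorem norm_sub_le_cyclic {E : Type*} [SeminormedAddCommGroup E] (x y z : E) :
    ‖y - z‖ ≤ ‖z - x‖ + ‖x - y‖ := by
  rw [add_comm, norm_sub_rev z, norm_sub_rev x]
  exact norm_sub_le_norm_sub_add_norm_sub y x z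

theorem eq_zero_of_tendsto_mul_log {ι : Type*} {l : Filter ι} [l.NeBot] {c L : ℝ} {f : ι → ℝ}
    (hf : Tendsto f l atTop) (hc : Tendsto (fun t => c * log (f t)) l (𝓝 L)) : c = 0 := by
  by_contra hc0
  have hlog : Tendsto (fun t => log (f t)) l (𝓝 (c⁻¹ * L)) :=
    (hc.const_mul c⁻¹).congr fun t => by field_simp
  exact not_tendsto_nhds_of_tendsto_atTop (tendsto_log_atTop.comp hf) _ hlog

theorem exists_tendsto_of_forall_mem_Icc {ι : Type*} (𝒰 : Ultrafilter ι) {f : ι → ℝ} {a b : ℝ}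
    (hf : ∀ t, f t ∈ Icc a b) : ∃ y ∈ Icc a b, Tendsto f 𝒰 (𝓝 y) :=
  isCompact_Icc.ultrafilter_le_nhds (𝒰.map f) (by
    rw [Ultrafilter.coe_map, le_principal_iff]; exact mem_map.2 (univ_mem' hf))

section Shape

variable {ι : Type*} {l : Filter ι} [l.NeBot] {α β γ L : ℝ} {a b c P : ι → ℝ}

theorem add_add_eq_zero_of_tendsto_div_ne_zero {u v w : ℝ}
    (ha0 : ∀ t, 0 < a t) (hb0 : ∀ t, 0 < b t) (hc0 : ∀ t, 0 < c t) (hP0 : ∀ t, 0 < P t)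
    (hP : Tendsto P l atTop) (hu : Tendsto (fun t => a t / P t) l (𝓝 u))
    (hv : Tendsto (fun t => b t / P t) l (𝓝 v)) (hw : Tendsto (fun t => c t / P t) l (𝓝 w))
    (hu0 : u ≠ 0) (hv0 : v ≠ 0) (hw0 : w ≠ 0)
    (hW : Tendsto (fun t => α * log (a t) + β * log (b t) + γ * log (c t)) l (𝓝 L)) :
    α + β + γ = 0 := by
  refine eq_zero_of_tendsto_mul_log hP ((hW.sub ((((hu.log hu0).const_mul α).add
    ((hv.log hv0).const_mul β)).add ((hw.log hw0).const_mul γ))).congr fun t => ?_)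
  simp only [log_div (ha0 t).ne' (hP0 t).ne', log_div (hb0 t).ne' (hP0 t).ne',
    log_div (hc0 t).ne' (hP0 t).ne']
  ring

theorem eq_zero_of_tendsto_div_ne_zero_of_add_eq_zero {v w : ℝ}
    (hb0 : ∀ t, 0 < b t) (hc0 : ∀ t, 0 < c t) (hP0 : ∀ t, 0 < P t)
    (ha : Tendsto a l atTop)
    (hv : Tendsto (fun t => b t / P t) l (𝓝 v)) (hw : Tendsto (fun t => c t / P t) l (𝓝 w))
    (hv0 : v ≠ 0) (hw0 : w ≠ 0) (hβγ : β + γ = 0)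
    (hW : Tendsto (fun t => α * log (a t) + β * log (b t) + γ * log (c t)) l (𝓝 L)) :
    α = 0 := by
  refine eq_zero_of_tendsto_mul_log ha ((hW.sub (((hv.log hv0).const_mul β).add
    ((hw.log hw0).const_mul γ))).congr fun t => ?_)
  simp only [log_div (hb0 t).ne' (hP0 t).ne', log_div (hc0 t).ne' (hP0 t).ne']
  linear_combination log (P t) * hβγ

theorem add_add_eq_zero_of_tendsto_div {u v w : ℝ} (hα : α ≠ 0) (hβ : β ≠ 0) (hγ : γ ≠ 0)
    (ha0 : ∀ t, 0 < a t) (hb0 : ∀ t, 0 < b t) (hc0 : ∀ t, 0 < c t) (hP0 : ∀ t, 0 < P t)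
    (ha : Tendsto a l atTop) (hb : Tendsto b l atTop) (hc : Tendsto c l atTop)
    (hP : Tendsto P l atTop) (hu : Tendsto (fun t => a t / P t) l (𝓝 u))
    (hv : Tendsto (fun t => b t / P t) l (𝓝 v)) (hw : Tendsto (fun t => c t / P t) l (𝓝 w))
    (hsum : u + v + w = 1) (huvw : u ≤ v + w) (hvwu : v ≤ w + u) (hwuv : w ≤ u + v)
    (hquad : α * u ^ 2 + β * v ^ 2 + γ * w ^ 2 = 0)
    (hW : Tendsto (fun t => α * log (a t) + β * log (b t) + γ * log (c t)) l (𝓝 L)) :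
    α + β + γ = 0 := by
  by_cases hnd : u ≠ 0 ∧ v ≠ 0 ∧ w ≠ 0
  · exact add_add_eq_zero_of_tendsto_div_ne_zero ha0 hb0 hc0 hP0 hP hu hv hw
      hnd.1 hnd.2.1 hnd.2.2 hW
  exfalso
  simp only [not_and_or, not_not] at hnd
  rcases hnd with rfl | rfl | rfl
  · obtain rfl : v = 1 / 2 := by linarith
    obtain rfl : w = 1 / 2 := by linarith
    exact hα (eq_zero_of_tendsto_div_ne_zero_of_add_eq_zero hb0 hc0 hP0 ha hv hw
      (by norm_num) (by norm_num) (by linarith) hW)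
  · obtain rfl : w = 1 / 2 := by linarith
    obtain rfl : u = 1 / 2 := by linarith
    exact hβ (eq_zero_of_tendsto_div_ne_zero_of_add_eq_zero (β := γ) (γ := α) hc0 ha0 hP0
      hb hw hu (by norm_num) (by norm_num) (by linarith) (hW.congr fun t => by ring))
  · obtain rfl : u = 1 / 2 := by linarith
    obtain rfl : v = 1 / 2 := by linarith
    exact hγ (eq_zero_of_tendsto_div_ne_zero_of_add_eq_zero (β := α) (γ := β) ha0 hb0 hP0
      hc hu hv (by norm_num) (by norm_num) (by linarith) (hW.congr fun t => by ring))

theorem add_add_eq_zero_of_triangle {K : ℝ} (hα : α ≠ 0) (hβ : β ≠ 0) (hγ : γ ≠ 0)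
    (ha0 : ∀ t, 0 < a t) (hb0 : ∀ t, 0 < b t) (hc0 : ∀ t, 0 < c t)
    (habc : ∀ t, a t ≤ b t + c t) (hbca : ∀ t, b t ≤ c t + a t) (hcab : ∀ t, c t ≤ a t + b t)
    (ha : Tendsto a l atTop) (hb : Tendsto b l atTop) (hc : Tendsto c l atTop)
    (hK : ∀ t, α * a t ^ 2 + β * b t ^ 2 + γ * c t ^ 2 = K)
    (hW : Tendsto (fun t => α * log (a t) + β * log (b t) + γ * log (c t)) l (𝓝 L)) :
    α + β + γ = 0 := by
  let 𝒰 := Ultrafilter.of l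
  have h𝒰 : (𝒰 : Filter ι) ≤ l := Ultrafilter.of_le l
  let P t := a t + b t + c t
  have hP0 t : 0 < P t := add_pos (add_pos (ha0 t) (hb0 t)) (hc0 t)
  have hP : Tendsto P 𝒰 atTop :=
    tendsto_atTop_mono (fun t => by linarith [hb0 t, hc0 t]) (ha.mono_left h𝒰)
  have hshape {x : ι → ℝ} (hx0 : ∀ t, 0 < x t) (hxP : ∀ t, x t ≤ P t) :
      ∃ y, Tendsto (fun t => x t / P t) 𝒰 (𝓝 y) :=
    let ⟨y, _, hy⟩ := exists_tendsto_of_forall_mem_Icc 𝒰 fun t =>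
      ⟨(div_pos (hx0 t) (hP0 t)).le, (div_le_one (hP0 t)).2 (hxP t)⟩
    ⟨y, hy⟩
  obtain ⟨u, hu⟩ := hshape ha0 fun t => by linarith [hb0 t, hc0 t]
  obtain ⟨v, hv⟩ := hshape hb0 fun t => by linarith [ha0 t, hc0 t]
  obtain ⟨w, hw⟩ := hshape hc0 fun t => by linarith [ha0 t, hb0 t]
  have hsum : u + v + w = 1 := tendsto_nhds_unique ((hu.add hv).add hw)
    (tendsto_const_nhds.congr fun t => by
      rw [← add_div, ← add_div]; exact (div_self (hP0 t).ne').symm)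
  have hlim_le {x y z : ι → ℝ} {x' y' z' : ℝ} (hxyz : ∀ t, x t ≤ y t + z t)
      (hx : Tendsto (fun t => x t / P t) 𝒰 (𝓝 x')) (hy : Tendsto (fun t => y t / P t) 𝒰 (𝓝 y'))
      (hz : Tendsto (fun t => z t / P t) 𝒰 (𝓝 z')) : x' ≤ y' + z' :=
    le_of_tendsto_of_tendsto' hx (hy.add hz) fun t => by
      rw [← add_div]; exact div_le_div_of_nonneg_right (hxyz t) (hP0 t).le
  have hquad : α * u ^ 2 + β * v ^ 2 + γ * w ^ 2 = 0 := by
    refine tendsto_nhds_unique (((hu.pow 2).const_mul α).add ((hv.pow 2).const_mul β)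
      |>.add ((hw.pow 2).const_mul γ)) ?_
    have hK0 : Tendsto (fun t => K * (P t ^ 2)⁻¹) 𝒰 (𝓝 (K * 0)) :=
      ((tendsto_pow_atTop two_ne_zero).comp hP).inv_tendsto_atTop.const_mul K
    rw [mul_zero] at hK0
    refine hK0.congr fun t => ?_
    rw [← hK t]
    field_simp
  exact add_add_eq_zero_of_tendsto_div hα hβ hγ ha0 hb0 hc0 hP0 (ha.mono_left h𝒰)
    (hb.mono_left h𝒰) (hc.mono_left h𝒰) hP hu hv hw hsum (hlim_le habc hu hv hw)
    (hlim_le hbca hv hw hu) (hlim_le hcab hw hu hv) hquad (hW.mono_left h𝒰)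

end Shape

open Filter in
/-- necessity of the collapse condition. Let `P_K` arise from a
positive continuous radial profile `h_r` with `2π ∫₀^∞ s h_r(s) ds = 1` and finite
second moment, via `P_K(r) = 2π ∫₀^r s h_r(s) ds`. If a global solution of the
three-vortex EP-PV system has all mutual distances tending to `∞` as `t → ±∞`,
then `1/Γ₁ + 1/Γ₂ + 1/Γ₃ = 0`. -/
theorem eppv_collapse_condition_necessary (h_r : ℝ → ℝ)
    (hcont : ContinuousOn h_r (Set.Ici 0))
    (hpos : ∀ s : ℝ, 0 ≤ s → 0 < h_r s)
    (hint1 : MeasureTheory.IntegrableOn (fun s => s * h_r s) (Set.Ioi 0))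
    (hnorm : 2 * Real.pi * ∫ s in Set.Ioi (0 : ℝ), s * h_r s = 1)
    (hint2 : MeasureTheory.IntegrableOn (fun s => s ^ 2 * h_r s) (Set.Ioi 0))
    (P_K : ℝ → ℝ)
    (hPK : ∀ r : ℝ, P_K r = 2 * Real.pi * ∫ s in (0 : ℝ)..r, s * h_r s)
    (Γ : Fin 3 → ℝ) (hΓ : ∀ n, Γ n ≠ 0)
    (X : Fin 3 → ℝ → EuclideanSpace ℝ (Fin 2))
    (hX : IsEPPVSolution Γ P_K Set.univ X)
    (hgrow : ∀ m n : Fin 3, m ≠ n →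
      Tendsto (fun t => ‖X m t - X n t‖) atTop atTop ∧
      Tendsto (fun t => ‖X m t - X n t‖) atBot atTop) :
    1 / Γ 0 + 1 / Γ 1 + 1 / Γ 2 = 0 := by
  have hh : IsRadialProfile h_r := ⟨hcont, hpos, hint1, hnorm, hint2⟩
  have hK := hX.inv_mul_sum_eq hΓ (G := fun r => r ^ 2) (a := 2) (b := 0) fun r _ => by
    simpa using hasDerivAt_pow 2 r
  have hH := hX.inv_mul_sum_eq hΓ (G := fun r => log r - logDefect P_K r) (a := 0) (b := 1)
    fun r hr => by simpa using hasDerivAt_log_sub_logDefect hcont hPK hr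
  have hdef {m n : Fin 3} (hmn : m ≠ n) :=
    (hh.tendsto_logDefect hPK).comp (hgrow m n hmn).1
  have hW := (tendsto_const_nhds.congr fun t => hH 0 t).add
    ((((hdef (m := 1) (n := 2) (by decide)).const_mul (1 / Γ 0)).add
      ((hdef (m := 2) (n := 0) (by decide)).const_mul (1 / Γ 1))).add
      ((hdef (m := 0) (n := 1) (by decide)).const_mul (1 / Γ 2)))
  exact add_add_eq_zero_of_triangle (a := fun t => ‖X 1 t - X 2 t‖)
    (b := fun t => ‖X 2 t - X 0 t‖) (c := fun t => ‖X 0 t - X 1 t‖)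
    (one_div_ne_zero (hΓ 0)) (one_div_ne_zero (hΓ 1)) (one_div_ne_zero (hΓ 2))
    (hX.norm_sub_pos (by decide)) (hX.norm_sub_pos (by decide)) (hX.norm_sub_pos (by decide))
    (fun t => norm_sub_le_cyclic (X 0 t) _ _) (fun t => norm_sub_le_cyclic (X 1 t) _ _)
    (fun t => norm_sub_le_cyclic (X 2 t) _ _)
    (hgrow 1 2 (by decide)).1 (hgrow 2 0 (by decide)).1 (hgrow 0 1 (by decide)).1 (fun t => hK t 0)
    (hW.congr fun t => by simp only [Function.comp_apply]; ring)
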